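/- Let X be a uniformly discrete metric space with bounded geometry, let X̃ be a uniformly discrete metric space, let R > 0, and let π : X̃ → X be a surjection which is a K-metric cover for some K > 2R + 1. Then for all bounded operators S, T on ℓ²(X,H₀) of propagation at most R and all scalars a, b ∈ ℂ: (a) the lift T̃ of T at scale R defines a bounded operator on ℓ²(X̃,H₀) of propagation at most R; (b) the lift of T* at scale R equals (T̃)*; (c) the lift of aS + bT at scale R equals a·S̃ + b·T̃; (d) the lift of ST at scale 2R equals S̃·T̃; and (e) if a group Γ acts on X̃ by isometries with π∘γ = π for every γ ∈ Γ, then T̃_{γu,γv} = T̃_{u,v} for all γ ∈ Γ and u,v ∈ X̃. -/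

import Mathlib

noncomputable section

open scoped ENNReal

/-- ℓ²(Y, H): the Hilbert space of square-summable `H`-valued families indexed by `Y`. -/
abbrev L2 (Y : Type*) (H : Type*) [NormedAddCommGroup H] [InnerProductSpace ℂ H] : Type _ :=
  lp (fun _ : Y => H) 2

namespace Roe

variable {Y H : Type*} [NormedAddCommGroup H] [InnerProductSpace ℂ H]

set_option maxHeartbeats 1000000 in
/-- The matrix entry `T_{x,y}` of a bounded operator `T` on `ℓ²(Y,H)`: the continuous linear
map on `H` determined by `T_{x,y} v = (T (δ_y ⊗ v)) x`. -/
def entry (T : L2 Y H →L[ℂ] L2 Y H) (x y : Y) : H →L[ℂ] H :=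
  letI := Classical.decEq Y
  LinearMap.mkContinuous
    { toFun := fun v => T (lp.single 2 y v) x
      map_add' := by
        intro v w
        show (T (lp.single 2 y (v + w))) x = (T (lp.single 2 y v)) x + (T (lp.single 2 y w)) x
        have h : lp.single (E := fun _ : Y => H) 2 y (v + w)
            = lp.single 2 y v + lp.single 2 y w := by
          apply lp.ext
          funext j
          by_cases hj : j = y
          · subst hj
            simp only [lp.single_apply_self, lp.coeFn_add, Pi.add_apply]
          · simp only [lp.single_apply_ne _ _ _ hj, lp.coeFn_add, Pi.add_apply, add_zero]
        rw [h, map_add]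
        simp only [lp.coeFn_add, Pi.add_apply]
      map_smul' := by
        intro c v
        show (T (lp.single 2 y (c • v))) x = c • (T (lp.single 2 y v)) x
        rw [lp.single_smul, map_smul]
        simp only [lp.coeFn_smul, Pi.smul_apply] }
    ‖T‖
    (by
      intro v
      show ‖(T (lp.single 2 y v)) x‖ ≤ ‖T‖ * ‖v‖
      have h1 : ‖(T (lp.single 2 y v)) x‖ ≤ ‖T (lp.single 2 y v)‖ :=
        lp.norm_apply_le_norm (by norm_num) _ _
      have h2 : ‖T (lp.single 2 y v)‖ ≤ ‖T‖ * ‖lp.single (E := fun _ : Y => H) 2 y v‖ :=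
        T.le_opNorm _
      have h3 : ‖lp.single (E := fun _ : Y => H) 2 y v‖ = ‖v‖ := by
        simpa using lp.norm_single (E := fun _ : Y => H) (p := 2) (by norm_num) (fun _ => v) y
      calc ‖(T (lp.single 2 y v)) x‖ ≤ ‖T‖ * ‖lp.single (E := fun _ : Y => H) 2 y v‖ :=
            le_trans h1 h2
        _ = ‖T‖ * ‖v‖ := by rw [h3])

/-- `T` has propagation at most `R` with respect to the distance function `d`. -/
def PropagationLE (d : Y → Y → ℝ) (T : L2 Y H →L[ℂ] L2 Y H) (R : ℝ) : Prop :=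
  ∀ x y : Y, R < d x y → entry T x y = 0

/-- A set is bounded with respect to the distance function `d`. -/
def DBounded (d : Y → Y → ℝ) (B : Set Y) : Prop :=
  ∃ C : ℝ, ∀ x ∈ B, ∀ y ∈ B, d x y ≤ C

/-- `T` is locally compact with respect to the distance function `d`: all matrix entries are
compact operators, and over every bounded set only finitely many matrix entries are nonzero. -/
def LocallyCompact (d : Y → Y → ℝ) (T : L2 Y H →L[ℂ] L2 Y H) : Prop :=
  (∀ x y : Y, IsCompactOperator (entry T x y)) ∧
    ∀ B : Set Y, DBounded d B →
      {p : Y × Y | p.1 ∈ B ∧ p.2 ∈ B ∧ entry T p.1 p.2 ≠ 0}.Finite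

/-- Membership in the algebraic Roe algebra `ℂ[Y]`: locally compact and finite propagation. -/
def MemRoeAlgebraic (d : Y → Y → ℝ) (T : L2 Y H →L[ℂ] L2 Y H) : Prop :=
  LocallyCompact d T ∧ ∃ R : ℝ, PropagationLE d T R

/-- The Roe algebra `C*(Y)`: the operator-norm closure of `ℂ[Y]` in `B(ℓ²(Y,H))`. -/
def RoeAlgebra (d : Y → Y → ℝ) : Set (L2 Y H →L[ℂ] L2 Y H) :=
  closure {T | MemRoeAlgebraic d T}

/-- `T` is a ghost operator with respect to the distance function `d`. -/
def IsGhost (d : Y → Y → ℝ) (T : L2 Y H →L[ℂ] L2 Y H) : Prop :=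
  ∀ R : ℝ, 0 < R → ∀ ε : ℝ, 0 < ε → ∃ B : Set Y, DBounded d B ∧
    ∀ ξ : L2 Y H, ‖ξ‖ = 1 →
      (∃ x : Y, x ∉ B ∧ ∀ z : Y, ξ z ≠ 0 → d x z < R) → ‖T ξ‖ < ε

/-- The support of `ξ ∈ ℓ²(Y,H)` has diameter at most `S` for the distance function `d`. -/
def SupportDiamLE (d : Y → Y → ℝ) (ξ : L2 Y H) (S : ℝ) : Prop :=
  ∀ z w : Y, ξ z ≠ 0 → ξ w ≠ 0 → d z w ≤ S

end Roe

/-- `π : X' → X` is a `K`-metric cover: it is surjective, and for every `u` the restriction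
of `π` to the open ball of radius `K` about `u` is a distance-preserving bijection onto the
open ball of radius `K` about `π u`. -/
def IsMetricCover {X' X : Type*} (d' : X' → X' → ℝ) (d : X → X → ℝ)
    (π : X' → X) (K : ℝ) : Prop :=
  Function.Surjective π ∧
    ∀ u : X', Set.BijOn π {w | d' u w < K} {x | d (π u) x < K} ∧
      ∀ w w' : X', d' u w < K → d' u w' < K → d (π w) (π w') = d' w w'

/-- `T'` is the lift of `T` at scale `R` along `π`: its matrix entries are
`T'_{u,v} = T_{π u, π v}` when `d'(u,v) ≤ R` and `0` otherwise. -/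
def IsLift {X' X H : Type*} [NormedAddCommGroup H] [InnerProductSpace ℂ H]
    (π : X' → X) (d' : X' → X' → ℝ)
    (T : L2 X H →L[ℂ] L2 X H) (R : ℝ) (T' : L2 X' H →L[ℂ] L2 X' H) : Prop :=
  ∀ u v : X', (d' u v ≤ R → Roe.entry T' u v = Roe.entry T (π u) (π v)) ∧
    (R < d' u v → Roe.entry T' u v = 0)

/-- `T'` is the lift at scale `S` along `π` of the `n`-th diagonal block `T⁽ⁿ⁾ = PₙTPₙ` of a
bounded operator `T` on `ℓ²(⊔ₙ Vₙ, H)`. -/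
def IsBlockLift {V : ℕ → Type*} {W H : Type*} [NormedAddCommGroup H] [InnerProductSpace ℂ H]
    {n : ℕ} (π : W → V n) (d' : W → W → ℝ)
    (T : L2 (Σ k, V k) H →L[ℂ] L2 (Σ k, V k) H) (S : ℝ)
    (T' : L2 W H →L[ℂ] L2 W H) : Prop :=
  ∀ u v : W, (d' u v ≤ S → Roe.entry T' u v = Roe.entry T ⟨n, π u⟩ ⟨n, π v⟩) ∧
    (S < d' u v → Roe.entry T' u v = 0)

/-- The graph metric of a simple graph, as a real-valued distance function
(shortest path length). -/
def gdist {V : Type*} (G : SimpleGraph V) (u v : V) : ℝ := G.dist u v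


/-!
Below scale `K` the cover is an isometry on balls, so each row and each column of the lift
carries the entries of `T` on a ball of `X`, transported bijectively. Bounded geometry bounds the
number of such entries uniformly, and Schur's test then makes the lift bounded. The algebraic
identities are checked entry by entry: adjoints and linear combinations act entrywise, and for a
product the sum `∑_z S̃_{u,z} T̃_{z,v}` runs over the `R`-ball about `v`, which `π` maps
isometrically onto the `R`-ball about `π v` because `K > 2R`; it is therefore the sum computing
`(ST)_{π u, π v}`, with the same terms.
-/

namespace Roe

variable {Y H : Type*} [NormedAddCommGroup H] [InnerProductSpace ℂ H]

open Finset

theorem entry_apply [DecidableEq Y] (T : L2 Y H →L[ℂ] L2 Y H) (x y : Y) (v : H) :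
    entry T x y v = T (lp.single 2 y v) x := by
  unfold entry
  simp only [LinearMap.mkContinuous_apply, LinearMap.coe_mk, AddHom.coe_mk]
  rw [Subsingleton.elim (Classical.decEq Y) ‹_›]

theorem norm_entry_le (T : L2 Y H →L[ℂ] L2 Y H) (x y : Y) : ‖entry T x y‖ ≤ ‖T‖ :=
  LinearMap.mkContinuous_norm_le _ (norm_nonneg T) _

theorem ext_entry {A B : L2 Y H →L[ℂ] L2 Y H} (h : ∀ x y, entry A x y = entry B x y) :
    A = B := by
  classical
  ext1 ξ
  have hξ : HasSum (fun y => lp.single 2 y (ξ y)) ξ := lp.hasSum_single ENNReal.ofNat_ne_top ξ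
  refine (hξ.mapL A).unique ?_
  convert hξ.mapL B using 2 with y
  refine lp.ext (funext fun x => ?_)
  simp only [← entry_apply, h]

theorem entry_adjoint [CompleteSpace H] (T : L2 Y H →L[ℂ] L2 Y H) (x y : Y) :
    entry (ContinuousLinearMap.adjoint T) x y = ContinuousLinearMap.adjoint (entry T y x) := by
  classical
  ext v
  refine ext_inner_right ℂ fun w => ?_
  rw [ContinuousLinearMap.adjoint_inner_left, entry_apply, entry_apply,
    ← lp.inner_single_right, ContinuousLinearMap.adjoint_inner_left, lp.inner_single_left]

theorem entry_add (S T : L2 Y H →L[ℂ] L2 Y H) (x y : Y) :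
    entry (S + T) x y = entry S x y + entry T x y := by
  classical
  ext v
  simp [entry_apply]

theorem entry_smul (a : ℂ) (T : L2 Y H →L[ℂ] L2 Y H) (x y : Y) :
    entry (a • T) x y = a • entry T x y := by
  classical
  ext v
  simp [entry_apply]

theorem apply_single_eq_sum [DecidableEq Y] (T : L2 Y H →L[ℂ] L2 Y H) {y : Y} {F : Finset Y}
    (hF : ∀ z ∉ F, entry T z y = 0) (v : H) :
    T (lp.single 2 y v) = ∑ z ∈ F, lp.single 2 z (entry T z y v) := by
  refine lp.ext (funext fun x => ?_)
  simp only [lp.coeFn_sum, Finset.sum_apply, lp.single_apply, sum_pi_single]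
  split_ifs with hx
  · rw [entry_apply]
  · rw [← entry_apply, hF x hx, zero_apply]

theorem entry_comp_apply [DecidableEq Y] (S T : L2 Y H →L[ℂ] L2 Y H) {y : Y} {F : Finset Y}
    (hF : ∀ z ∉ F, entry T z y = 0) (x : Y) (v : H) :
    entry (S ∘L T) x y v = ∑ z ∈ F, entry S x z (entry T z y v) := by
  rw [entry_apply, ContinuousLinearMap.comp_apply, apply_single_eq_sum T hF, map_sum,
    lp.coeFn_sum, Finset.sum_apply]
  simp only [entry_apply]

section OfMatrix

variable (A : Y → Y → H →L[ℂ] H) (F : Y → Finset Y) {M : ℝ} {N : ℕ}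

theorem norm_sum_apply_sq_le (hA : ∀ u v, ‖A u v‖ ≤ M) (hF : ∀ u, #(F u) ≤ N) (ξ : Y → H)
    (u : Y) : ‖∑ v ∈ F u, A u v (ξ v)‖ ^ 2 ≤ N * M ^ 2 * ∑ v ∈ F u, ‖ξ v‖ ^ 2 := by
  have hrow : ‖∑ v ∈ F u, A u v (ξ v)‖ ≤ ∑ v ∈ F u, M * ‖ξ v‖ :=
    (norm_sum_le _ _).trans <| sum_le_sum fun v _ =>
      (A u v).le_of_opNorm_le (hA u v) (ξ v)
  calc ‖∑ v ∈ F u, A u v (ξ v)‖ ^ 2 ≤ (∑ v ∈ F u, M * ‖ξ v‖) ^ 2 :=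
        pow_le_pow_left₀ (norm_nonneg _) hrow 2
    _ ≤ #(F u) * ∑ v ∈ F u, (M * ‖ξ v‖) ^ 2 := sq_sum_le_card_mul_sum_sq
    _ ≤ N * ∑ v ∈ F u, (M * ‖ξ v‖) ^ 2 := by gcongr; exact hF u
    _ = N * M ^ 2 * ∑ v ∈ F u, ‖ξ v‖ ^ 2 := by simp only [mul_pow, ← mul_sum, mul_assoc]

theorem sum_sum_norm_sq_le [DecidableEq Y] (hF : ∀ u, #(F u) ≤ N)
    (hsymm : ∀ u v, u ∈ F v ↔ v ∈ F u) (ξ : L2 Y H) (G : Finset Y) : ∑ u ∈ G, ∑ v ∈ F u, ‖ξ v‖ ^ 2 ≤ N * ‖ξ‖ ^ 2 := by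
  have hswap : ∑ u ∈ G, ∑ v ∈ F u, ‖ξ v‖ ^ 2 = ∑ v ∈ G.biUnion F, ∑ _u ∈ G ∩ F v, ‖ξ v‖ ^ 2 :=
    sum_comm' fun u v => by simp only [mem_biUnion, mem_inter, hsymm u v]; grind
  calc ∑ u ∈ G, ∑ v ∈ F u, ‖ξ v‖ ^ 2
      = ∑ v ∈ G.biUnion F, #(G ∩ F v) * ‖ξ v‖ ^ 2 := by simp [hswap]
    _ ≤ ∑ v ∈ G.biUnion F, N * ‖ξ v‖ ^ 2 := by
        gcongr with v
        exact_mod_cast (card_le_card inter_subset_right).trans (hF v)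
    _ ≤ N * ‖ξ‖ ^ 2 := by
        rw [← mul_sum]
        gcongr
        simpa using lp.sum_rpow_le_norm_rpow (by norm_num) ξ (G.biUnion F)

theorem sum_norm_sum_apply_sq_le (hA : ∀ u v, ‖A u v‖ ≤ M) (hF : ∀ u, #(F u) ≤ N)
    (hsymm : ∀ u v, u ∈ F v ↔ v ∈ F u) (ξ : L2 Y H) (G : Finset Y) :
    ∑ u ∈ G, ‖∑ v ∈ F u, A u v (ξ v)‖ ^ 2 ≤ (N * M * ‖ξ‖) ^ 2 := by
  classical
  calc ∑ u ∈ G, ‖∑ v ∈ F u, A u v (ξ v)‖ ^ 2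
      ≤ ∑ u ∈ G, N * M ^ 2 * ∑ v ∈ F u, ‖ξ v‖ ^ 2 :=
        sum_le_sum fun u _ => norm_sum_apply_sq_le A F hA hF ξ u
    _ ≤ N * M ^ 2 * (N * ‖ξ‖ ^ 2) := by
        rw [← mul_sum]
        gcongr
        exact sum_sum_norm_sq_le F hF hsymm ξ G
    _ = (N * M * ‖ξ‖) ^ 2 := by ring

def ofMatrix (hM : 0 ≤ M) (hA : ∀ u v, ‖A u v‖ ≤ M) (hF : ∀ u, #(F u) ≤ N)
    (hsymm : ∀ u v, u ∈ F v ↔ v ∈ F u) : L2 Y H →L[ℂ] L2 Y H :=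
  LinearMap.mkContinuous
    { toFun := fun ξ => ⟨fun u => ∑ v ∈ F u, A u v (ξ v), memℓp_gen' fun G => by
        simpa only [ENNReal.toReal_ofNat, Real.rpow_two]
          using sum_norm_sum_apply_sq_le A F hA hF hsymm ξ G⟩
      map_add' := fun ξ η => lp.ext <| funext fun u => by simp [sum_add_distrib]; rfl
      map_smul' := fun c ξ => lp.ext <| funext fun u => by simp [smul_sum] }
    (N * M) fun ξ => lp.norm_le_of_forall_sum_le (by norm_num) (by positivity) fun G => by
      simp only [ENNReal.toReal_ofNat, Real.rpow_two]
      exact sum_norm_sum_apply_sq_le A F hA hF hsymm ξ G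

variable {A F}

theorem ofMatrix_apply (hM : 0 ≤ M) (hA : ∀ u v, ‖A u v‖ ≤ M) (hF : ∀ u, #(F u) ≤ N)
    (hsymm : ∀ u v, u ∈ F v ↔ v ∈ F u) (ξ : L2 Y H) (u : Y) :
    ofMatrix A F hM hA hF hsymm ξ u = ∑ v ∈ F u, A u v (ξ v) :=
  rfl

theorem entry_ofMatrix [DecidableEq Y] (hM : 0 ≤ M) (hA : ∀ u v, ‖A u v‖ ≤ M)
    (hF : ∀ u, #(F u) ≤ N) (hsymm : ∀ u v, u ∈ F v ↔ v ∈ F u) (u v : Y) :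
    entry (ofMatrix A F hM hA hF hsymm) u v = if v ∈ F u then A u v else 0 := by
  ext w
  rw [entry_apply, ofMatrix_apply]
  have hsingle : ∀ v', A u v' (Pi.single (M := fun _ => H) v w v')
      = Pi.single (M := fun _ => H) v (A u v w) v' := fun v' => by
    rcases eq_or_ne v' v with rfl | h
    · simp
    · simp [Pi.single_eq_of_ne h]
  simp only [lp.single_apply, hsingle, sum_pi_single']
  split_ifs <;> rfl

end OfMatrix

end Roe

namespace IsMetricCover

open Metric

variable {X' X : Type*} [MetricSpace X'] [MetricSpace X] {π : X' → X} {K r : ℝ}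

theorem dist_map_eq (hπ : IsMetricCover dist dist π K) {u w w' : X'} (hw : dist u w < K)
    (hw' : dist u w' < K) : dist (π w) (π w') = dist w w' :=
  (hπ.2 u).2 w w' hw hw'

theorem dist_map_eq_of_lt (hπ : IsMetricCover dist dist π K) {u v : X'} (huv : dist u v < K) :
    dist (π u) (π v) = dist u v :=
  hπ.dist_map_eq (by simpa using dist_nonneg.trans_lt huv) huv

theorem injOn_closedBall (hπ : IsMetricCover dist dist π K) (hr : r < K) (u : X') :
    Set.InjOn π (closedBall u r) :=
  (hπ.2 u).1.injOn.mono fun _ hw => (mem_closedBall'.1 hw).trans_lt hr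

theorem image_closedBall (hπ : IsMetricCover dist dist π K) (hr : r < K) (u : X') :
    π '' closedBall u r = closedBall (π u) r := by
  ext x
  simp only [Set.mem_image, mem_closedBall']
  constructor
  · rintro ⟨w, hw, rfl⟩
    rwa [hπ.dist_map_eq_of_lt (hw.trans_lt hr)]
  · intro hx
    obtain ⟨w, hw, rfl⟩ := (hπ.2 u).1.surjOn (show dist (π u) x < K from hx.trans_lt hr)
    exact ⟨w, by rwa [← hπ.dist_map_eq_of_lt hw], rfl⟩

theorem finite_closedBall (hπ : IsMetricCover dist dist π K) (hr : r < K) {u : X'}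
    (hfin : (closedBall (π u) r).Finite) : (closedBall u r).Finite :=
  Set.Finite.of_finite_image (by rwa [hπ.image_closedBall hr]) (hπ.injOn_closedBall hr u)

theorem ncard_closedBall (hπ : IsMetricCover dist dist π K) (hr : r < K) (u : X') :
    (closedBall u r).ncard = (closedBall (π u) r).ncard := by
  rw [← hπ.image_closedBall hr, (hπ.injOn_closedBall hr u).ncard_image]

end IsMetricCover

namespace IsLift

open Metric Roe Finset

variable {X' X H : Type*} [NormedAddCommGroup H] [InnerProductSpace ℂ H] {π : X' → X}
  {T : L2 X H →L[ℂ] L2 X H} {T' : L2 X' H →L[ℂ] L2 X' H} {R : ℝ}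

theorem _root_.isLift_iff {d' : X' → X' → ℝ} : IsLift π d' T R T' ↔
    ∀ u v, entry T' u v = if d' u v ≤ R then entry T (π u) (π v) else 0 := by
  refine forall₂_congr fun u v => ?_
  by_cases h : d' u v ≤ R
  · simp [h]
  · simp [h, not_le.1 h]

theorem propagationLE {d' : X' → X' → ℝ} (hT' : IsLift π d' T R T') : PropagationLE d' T' R :=
  fun u v huv => (hT' u v).2 huv

theorem eq {d' : X' → X' → ℝ} {T'' : L2 X' H →L[ℂ] L2 X' H} (hT' : IsLift π d' T R T')
    (hT'' : IsLift π d' T R T'') : T' = T'' :=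
  ext_entry fun u v => by rw [isLift_iff.1 hT', isLift_iff.1 hT'']

theorem smul_add {d' : X' → X' → ℝ} {S : L2 X H →L[ℂ] L2 X H} {S' : L2 X' H →L[ℂ] L2 X' H}
    (hS' : IsLift π d' S R S') (hT' : IsLift π d' T R T') (a b : ℂ) :
    IsLift π d' (a • S + b • T) R (a • S' + b • T') :=
  isLift_iff.2 fun u v => by
    simp only [entry_add, entry_smul, isLift_iff.1 hS', isLift_iff.1 hT']
    split_ifs <;> simp

variable [MetricSpace X']

theorem adjoint [CompleteSpace H] (hT' : IsLift π dist T R T') :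
    IsLift π dist (ContinuousLinearMap.adjoint T) R (ContinuousLinearMap.adjoint T') :=
  isLift_iff.2 fun u v => by
    rw [entry_adjoint, entry_adjoint, isLift_iff.1 hT', dist_comm]
    split_ifs <;> simp

theorem entry_smul_smul {Γ : Type*} [SMul Γ X']
    (hiso : ∀ (γ : Γ) (u v : X'), dist (γ • u) (γ • v) = dist u v)
    (hπ : ∀ (γ : Γ) (u : X'), π (γ • u) = π u) (hT' : IsLift π dist T R T') (γ : Γ) (u v : X') :
    entry T' (γ • u) (γ • v) = entry T' u v := by
  rw [isLift_iff.1 hT', isLift_iff.1 hT', hiso, hπ, hπ]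

variable [MetricSpace X] {S : L2 X H →L[ℂ] L2 X H} {S' : L2 X' H →L[ℂ] L2 X' H} {K : ℝ}

theorem entry_eq_of_dist_map_eq (hS : PropagationLE dist S R) (hS' : IsLift π dist S R S')
    {u v : X'} (huv : dist (π u) (π v) = dist u v) : entry S' u v = entry S (π u) (π v) := by
  rw [isLift_iff.1 hS']
  split_ifs with h
  · rfl
  · exact (hS _ _ (huv ▸ not_le.1 h)).symm

theorem comp (hS' : IsLift π dist S R S') (hT' : IsLift π dist T R T')
    (hcover : IsMetricCover dist dist π K) (hR : 0 ≤ R) (hK : 2 * R < K)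
    (hfin : ∀ x : X, (closedBall x R).Finite) (hS : PropagationLE dist S R)
    (hT : PropagationLE dist T R) :
    IsLift π dist (S ∘L T) (2 * R) (S' ∘L T') := by
  classical
  have hRK : R < K := by linarith
  refine isLift_iff.2 fun u v => ?_
  set B := (hcover.finite_closedBall hRK (hfin (π v))).toFinset
  have hB : ∀ z, z ∈ B ↔ dist z v ≤ R := by simp [B]
  have hπB : ∀ x, x ∈ B.image π ↔ dist x (π v) ≤ R := fun x => by
    rw [← mem_coe, coe_image, Set.Finite.coe_toFinset, hcover.image_closedBall hRK, mem_closedBall]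
  have hT'col : ∀ z ∉ B, entry T' z v = 0 := fun z hz =>
    hT'.propagationLE z v (not_le.1 fun h => hz ((hB z).2 h))
  have hTcol : ∀ x ∉ B.image π, entry T x (π v) = 0 := fun x hx =>
    hT x (π v) (not_le.1 fun h => hx ((hπB x).2 h))
  ext w
  rw [entry_comp_apply S' T' hT'col]
  split_ifs with huv
  · rw [entry_comp_apply S T hTcol, sum_image fun z hz z' hz' =>
      hcover.injOn_closedBall hRK v ((hB z).1 hz) ((hB z').1 hz')]
    refine sum_congr rfl fun z hz => ?_
    have hzv : dist z v ≤ R := (hB z).1 hz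
    have hdist : dist (π u) (π z) = dist u z :=
      hcover.dist_map_eq (u := v) (by rw [dist_comm]; linarith) (by rw [dist_comm]; linarith)
    rw [entry_eq_of_dist_map_eq hS hS' hdist, isLift_iff.1 hT' z v, if_pos hzv]
  · refine (sum_eq_zero fun z hz => ?_).trans (zero_apply w).symm
    have huz : R < dist u z := by linarith [dist_triangle u z v, (hB z).1 hz]
    rw [(hS' u z).2 huz, zero_apply]

end IsLift

theorem IsMetricCover.exists_isLift {X' X H : Type*} [MetricSpace X'] [MetricSpace X]
    [NormedAddCommGroup H] [InnerProductSpace ℂ H] {π : X' → X} {K R : ℝ} {N : ℕ}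
    (hcover : IsMetricCover dist dist π K) (hRK : R < K)
    (hfin : ∀ x : X, (Metric.closedBall x R).Finite)
    (hcard : ∀ x : X, (Metric.closedBall x R).ncard ≤ N) (T : L2 X H →L[ℂ] L2 X H) :
    ∃ T' : L2 X' H →L[ℂ] L2 X' H, IsLift π dist T R T' := by
  classical
  let F : X' → Finset X' := fun u => (hcover.finite_closedBall hRK (hfin (π u))).toFinset
  have hF : ∀ u v, v ∈ F u ↔ dist u v ≤ R := by simp [F, dist_comm]
  have hFcard : ∀ u, (F u).card ≤ N := fun u => by
    rw [← Set.ncard_coe_finset, Set.Finite.coe_toFinset, hcover.ncard_closedBall hRK]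
    exact hcard _
  refine ⟨Roe.ofMatrix (fun u v => Roe.entry T (π u) (π v)) F (norm_nonneg T)
    (fun _ _ => Roe.norm_entry_le T _ _) hFcard (fun u v => by rw [hF, hF, dist_comm]), ?_⟩
  exact isLift_iff.2 fun u v => by simp only [Roe.entry_ofMatrix, hF]

theorem lift_star_algebra_properties_general
    (H₀ : Type) [NormedAddCommGroup H₀] [InnerProductSpace ℂ H₀] [CompleteSpace H₀]
    (X' X : Type) [MetricSpace X'] [MetricSpace X]
    (hbg : ∀ r : ℝ, ∃ N : ℕ, ∀ x : X, (Metric.ball x r).Finite ∧ (Metric.ball x r).ncard ≤ N)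
    (π : X' → X) (K R : ℝ) (hR : 0 < R)
    (hcover : IsMetricCover (fun u v : X' => dist u v) (fun x y : X => dist x y) π K)
    (hK : 2 * R + 1 < K)
    (S T : L2 X H₀ →L[ℂ] L2 X H₀)
    (hS : Roe.PropagationLE (fun x y : X => dist x y) S R)
    (hT : Roe.PropagationLE (fun x y : X => dist x y) T R)
    (a b : ℂ) :
    -- (a) the lift of `T` at scale `R` exists as a bounded operator, of propagation ≤ R
    (∃ T' : L2 X' H₀ →L[ℂ] L2 X' H₀, IsLift π (fun u v : X' => dist u v) T R T' ∧
        Roe.PropagationLE (fun u v : X' => dist u v) T' R) ∧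
    -- (b) the lift of the adjoint is the adjoint of the lift
    (∀ T' T'' : L2 X' H₀ →L[ℂ] L2 X' H₀,
      IsLift π (fun u v : X' => dist u v) T R T' →
      IsLift π (fun u v : X' => dist u v) (ContinuousLinearMap.adjoint T) R T'' →
      T'' = ContinuousLinearMap.adjoint T') ∧
    -- (c) lifting is linear
    (∀ S' T' C' : L2 X' H₀ →L[ℂ] L2 X' H₀,
      IsLift π (fun u v : X' => dist u v) S R S' →
      IsLift π (fun u v : X' => dist u v) T R T' →
      IsLift π (fun u v : X' => dist u v) (a • S + b • T) R C' →
      C' = a • S' + b • T') ∧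
    -- (d) the lift of the product at scale 2R is the product of the lifts
    (∀ S' T' C' : L2 X' H₀ →L[ℂ] L2 X' H₀,
      IsLift π (fun u v : X' => dist u v) S R S' →
      IsLift π (fun u v : X' => dist u v) T R T' →
      IsLift π (fun u v : X' => dist u v) (S ∘L T) (2 * R) C' →
      C' = S' ∘L T') ∧
    -- (e) lifts are invariant under isometries of `X'` commuting with `π`
    (∀ (Γ : Type) (_ : Group Γ) (_ : MulAction Γ X'),
      (∀ (γ : Γ) (u v : X'), dist (γ • u) (γ • v) = dist u v) →
      (∀ (γ : Γ) (u : X'), π (γ • u) = π u) →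
      ∀ T' : L2 X' H₀ →L[ℂ] L2 X' H₀,
        IsLift π (fun u v : X' => dist u v) T R T' →
        ∀ (γ : Γ) (u v : X'), Roe.entry T' (γ • u) (γ • v) = Roe.entry T' u v) := by
  obtain ⟨N, hN⟩ := hbg (R + 1)
  have hsub : ∀ x : X, Metric.closedBall x R ⊆ Metric.ball x (R + 1) := fun x =>
    Metric.closedBall_subset_ball (lt_add_one R)
  have hfin : ∀ x : X, (Metric.closedBall x R).Finite := fun x => (hN x).1.subset (hsub x)
  have hcard : ∀ x : X, (Metric.closedBall x R).ncard ≤ N := fun x =>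
    (Set.ncard_le_ncard (hsub x) (hN x).1).trans (hN x).2
  refine ⟨?_, fun T' T'' hT' hT'' => hT''.eq hT'.adjoint,
    fun S' T' C' hS' hT' hC' => hC'.eq (hS'.smul_add hT' a b),
    fun S' T' C' hS' hT' hC' => hC'.eq (hS'.comp hT' hcover hR.le (by linarith) hfin hS hT),
    fun Γ _ _ hiso hπ T' hT' => hT'.entry_smul_smul hiso hπ⟩
  obtain ⟨T', hT'⟩ := hcover.exists_isLift (by linarith) hfin hcard T
  exact ⟨T', hT', hT'.propagationLE⟩

/-- basic algebraic properties of lifting operators along a metric cover. -/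
theorem lift_star_algebra_properties
    (H₀ : Type) [NormedAddCommGroup H₀] [InnerProductSpace ℂ H₀] [CompleteSpace H₀]
    [TopologicalSpace.SeparableSpace H₀] (hinf : ¬ FiniteDimensional ℂ H₀)
    (X' X : Type) [MetricSpace X'] [MetricSpace X]
    (hud' : ∃ δ : ℝ, 0 < δ ∧ ∀ u v : X', u ≠ v → δ ≤ dist u v)
    (hud : ∃ δ : ℝ, 0 < δ ∧ ∀ x y : X, x ≠ y → δ ≤ dist x y)
    (hbg : ∀ r : ℝ, ∃ N : ℕ, ∀ x : X, (Metric.ball x r).Finite ∧ (Metric.ball x r).ncard ≤ N)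
    (π : X' → X) (K R : ℝ) (hR : 0 < R)
    (hcover : IsMetricCover (fun u v : X' => dist u v) (fun x y : X => dist x y) π K)
    (hK : 2 * R + 1 < K)
    (S T : L2 X H₀ →L[ℂ] L2 X H₀)
    (hS : Roe.PropagationLE (fun x y : X => dist x y) S R)
    (hT : Roe.PropagationLE (fun x y : X => dist x y) T R)
    (a b : ℂ) :
    -- (a) the lift of `T` at scale `R` exists as a bounded operator, of propagation ≤ R
    (∃ T' : L2 X' H₀ →L[ℂ] L2 X' H₀, IsLift π (fun u v : X' => dist u v) T R T' ∧
        Roe.PropagationLE (fun u v : X' => dist u v) T' R) ∧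
    -- (b) the lift of the adjoint is the adjoint of the lift
    (∀ T' T'' : L2 X' H₀ →L[ℂ] L2 X' H₀,
      IsLift π (fun u v : X' => dist u v) T R T' →
      IsLift π (fun u v : X' => dist u v) (ContinuousLinearMap.adjoint T) R T'' →
      T'' = ContinuousLinearMap.adjoint T') ∧
    -- (c) lifting is linear
    (∀ S' T' C' : L2 X' H₀ →L[ℂ] L2 X' H₀,
      IsLift π (fun u v : X' => dist u v) S R S' →
      IsLift π (fun u v : X' => dist u v) T R T' →
      IsLift π (fun u v : X' => dist u v) (a • S + b • T) R C' →
      C' = a • S' + b • T') ∧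
    -- (d) the lift of the product at scale 2R is the product of the lifts
    (∀ S' T' C' : L2 X' H₀ →L[ℂ] L2 X' H₀,
      IsLift π (fun u v : X' => dist u v) S R S' →
      IsLift π (fun u v : X' => dist u v) T R T' →
      IsLift π (fun u v : X' => dist u v) (S ∘L T) (2 * R) C' →
      C' = S' ∘L T') ∧
    -- (e) lifts are invariant under isometries of `X'` commuting with `π`
    (∀ (Γ : Type) (_ : Group Γ) (_ : MulAction Γ X'),
      (∀ (γ : Γ) (u v : X'), dist (γ • u) (γ • v) = dist u v) →
      (∀ (γ : Γ) (u : X'), π (γ • u) = π u) →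
      ∀ T' : L2 X' H₀ →L[ℂ] L2 X' H₀,
        IsLift π (fun u v : X' => dist u v) T R T' →
        ∀ (γ : Γ) (u v : X'), Roe.entry T' (γ • u) (γ • v) = Roe.entry T' u v) :=
  lift_star_algebra_properties_general H₀ X' X hbg π K R hR hcover hK S T hS hT a b
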